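/- arXiv:2511.20978 — 6 statements merged into one kernel-verified Lean document; each statement's English description precedes it below -/
import Mathlib

section
/- For every ε > 0 and every real s > 0, one has (1 + s^((n-2)/n))^(n/(n-2)) ≤ (1+ε)·s + C_ε, where n ≥ 3 is an integer and C_ε = (1 - (1+ε)^(-(n-2)/2))^(-2/(n-2)). -/
/-! Write `p = n/(n-2)`, so that `1 - p = -2/(n-2)`, and `μ = (1+ε)^(-(n-2)/2)`, so that
`μ^(1-p) = 1+ε`. Convexity of `x ↦ x^p` applied to `1 + a = μ (a/μ) + (1-μ) (1/(1-μ))`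
with `a = s^(1/p)` gives `(1 + a)^p ≤ μ^(1-p) s + (1-μ)^(1-p)`, which is the claim. -/

namespace Real

lemma mul_div_rpow_eq_rpow_mul {t x : ℝ} (ht : 0 < t) (hx : 0 ≤ x) (p : ℝ) :
    t * (x / t) ^ p = t ^ (1 - p) * x ^ p := by
  rw [div_rpow hx ht.le, rpow_sub ht, rpow_one]
  ring

lemma rpow_add_le_weighted_rpow_add_rpow {p t a b : ℝ} (hp : 1 ≤ p) (ht₀ : 0 < t) (ht₁ : t < 1)
    (ha : 0 ≤ a) (hb : 0 ≤ b) :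
    (a + b) ^ p ≤ t ^ (1 - p) * a ^ p + (1 - t) ^ (1 - p) * b ^ p := by
  have hu : 0 < 1 - t := sub_pos.mpr ht₁
  have hconv := (convexOn_rpow hp).2 (x := a / t) (y := b / (1 - t))
    (div_nonneg ha ht₀.le) (div_nonneg hb hu.le) ht₀.le hu.le (add_sub_cancel t 1)
  simp only [smul_eq_mul, mul_div_cancel₀ _ ht₀.ne', mul_div_cancel₀ _ hu.ne'] at hconv
  rwa [mul_div_rpow_eq_rpow_mul ht₀ ha, mul_div_rpow_eq_rpow_mul hu hb] at hconv

end Real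

open Real in
theorem stmt_0 (n : ℕ) (hn : 3 ≤ n) (ε : ℝ) (hε : 0 < ε) (s : ℝ) (hs : 0 < s) :
    (1 + s ^ (((n : ℝ) - 2) / n)) ^ ((n : ℝ) / ((n : ℝ) - 2)) ≤
      (1 + ε) * s + (1 - (1 + ε) ^ (-(((n : ℝ) - 2) / 2))) ^ (-2 / ((n : ℝ) - 2)) := by
  have hn₂ : (0 : ℝ) < n - 2 := by
    have : (3 : ℝ) ≤ n := by exact_mod_cast hn
    linarith
  set p : ℝ := n / (n - 2)
  have hp : 1 ≤ p := by rw [le_div_iff₀ hn₂]; linarith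
  have h1p : 1 - p = -2 / (n - 2) := by simp only [p]; field_simp; ring
  set μ : ℝ := (1 + ε) ^ (-(((n : ℝ) - 2) / 2))
  have hμ : 0 < μ := by positivity
  have hμ₁ : μ < 1 := rpow_lt_one_of_one_lt_of_neg (by linarith) (by linarith)
  have hμp : μ ^ (1 - p) = 1 + ε := by
    rw [← rpow_mul (by positivity), h1p, show -(((n : ℝ) - 2) / 2) * (-2 / ((n : ℝ) - 2)) = 1 by
      field_simp, rpow_one]
  have hsp : (s ^ (((n : ℝ) - 2) / n)) ^ p = s := by
    have : ((n : ℝ) - 2) / n * p = 1 := by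
      simp only [p]
      field_simp
    rw [← rpow_mul hs.le, this, rpow_one]
  have key := rpow_add_le_weighted_rpow_add_rpow hp (sub_pos.mpr hμ₁) (sub_lt_self 1 hμ)
    zero_le_one (rpow_nonneg hs.le (((n : ℝ) - 2) / n))
  rw [sub_sub_cancel, hμp, hsp, one_rpow, mul_one, h1p] at key
  linarith
end

section
/- Let n ≥ 3, 0 ≤ β < n, λ > 0, and j ≥ 2 an integer with j ≥ n/2. Define Φ(t) = e^t − Σ_{k=0}^{j−2} t^k/k! and H(t) = Φ(λ t^(n/(n−2))) / (1 + t^((n/(n−2))(1−β/n))) for t ≥ 0. Then H is nondecreasing on [0, ∞). -/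
/-- Each term of the shifted exponential series, divided by `1 + t ^ q`, is monotone. -/
lemma term_mono {p q : ℝ} (hp : 0 ≤ p) (hq0 : 0 ≤ q) (K : ℕ) (hqK : q ≤ p * K)
    {lam : ℝ} (hlam : 0 ≤ lam) {a b : ℝ} (ha : 0 ≤ a) (hab : a ≤ b) :
    (lam * a ^ p) ^ K / (Nat.factorial K : ℝ) / (1 + a ^ q) ≤
      (lam * b ^ p) ^ K / (Nat.factorial K : ℝ) / (1 + b ^ q) := by
  have hb : 0 ≤ b := ha.trans hab
  have haq : (0:ℝ) < 1 + a ^ q := by positivity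
  have hbq : (0:ℝ) < 1 + b ^ q := by positivity
  have hfac : (0:ℝ) < (Nat.factorial K : ℝ) := by positivity
  rw [div_div, div_div, div_le_div_iff₀ (by positivity) (by positivity)]
  have key : (lam * a ^ p) ^ K * (1 + b ^ q) ≤ (lam * b ^ p) ^ K * (1 + a ^ q) := by
    have hA : (lam * a ^ p) ^ K = lam ^ K * a ^ (p * K) := by
      rw [mul_pow, Real.rpow_mul ha, Real.rpow_natCast]
    have hB : (lam * b ^ p) ^ K = lam ^ K * b ^ (p * K) := by
      rw [mul_pow, Real.rpow_mul hb, Real.rpow_natCast]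
    rw [hA, hB, mul_add, mul_add, mul_one, mul_one]
    have h1 : lam ^ K * a ^ (p * K) ≤ lam ^ K * b ^ (p * K) :=
      mul_le_mul_of_nonneg_left (Real.rpow_le_rpow ha hab (by positivity))
        (by positivity)
    have h2 : a ^ (p * K) * b ^ q ≤ b ^ (p * K) * a ^ q := by
      have hsplit : p * K = q + (p * K - q) := by ring
      have hdq : 0 ≤ p * K - q := by linarith
      rw [hsplit, Real.rpow_add_of_nonneg ha hq0 hdq,
        Real.rpow_add_of_nonneg hb hq0 hdq]
      calc a ^ q * a ^ (p * K - q) * b ^ q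
          ≤ a ^ q * b ^ (p * K - q) * b ^ q := by
            have h := Real.rpow_le_rpow ha hab hdq
            have h0 : (0:ℝ) ≤ a ^ q := Real.rpow_nonneg ha q
            have h0' : (0:ℝ) ≤ b ^ q := Real.rpow_nonneg hb q
            exact mul_le_mul_of_nonneg_right (mul_le_mul_of_nonneg_left h h0) h0'
        _ = b ^ q * b ^ (p * K - q) * a ^ q := by ring
    calc lam ^ K * a ^ (p * K) + lam ^ K * a ^ (p * K) * b ^ q
        ≤ lam ^ K * b ^ (p * K) + lam ^ K * (a ^ (p * K) * b ^ q) := by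
          rw [mul_assoc]; linarith
      _ ≤ lam ^ K * b ^ (p * K) + lam ^ K * (b ^ (p * K) * a ^ q) := by
          have : (0:ℝ) ≤ lam ^ K := by positivity
          nlinarith
      _ = lam ^ K * b ^ (p * K) + lam ^ K * b ^ (p * K) * a ^ q := by ring
  calc (lam * a ^ p) ^ K * ((Nat.factorial K : ℝ) * (1 + b ^ q))
      = ((lam * a ^ p) ^ K * (1 + b ^ q)) * (Nat.factorial K : ℝ) := by ring
    _ ≤ ((lam * b ^ p) ^ K * (1 + a ^ q)) * (Nat.factorial K : ℝ) :=
        mul_le_mul_of_nonneg_right key hfac.le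
    _ = (lam * b ^ p) ^ K * ((Nat.factorial K : ℝ) * (1 + a ^ q)) := by ring

/-- Tail of the exponential series. -/
lemma exp_sub_sum (y : ℝ) (m : ℕ) :
    Real.exp y - ∑ k ∈ Finset.range m, y ^ k / (Nat.factorial k : ℝ) =
      ∑' k : ℕ, y ^ (k + m) / (Nat.factorial (k + m) : ℝ) := by
  have hs := Real.summable_pow_div_factorial y
  have h := Summable.sum_add_tsum_nat_add m hs
  have hexp : Real.exp y = ∑' k : ℕ, y ^ k / (Nat.factorial k : ℝ) := by
    rw [Real.exp_eq_exp_ℝ, NormedSpace.exp_eq_tsum_div]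
  rw [hexp, ← h]
  ring

theorem stmt_1 (n : ℕ) (hn : 3 ≤ n) (β lam : ℝ) (hβ : 0 ≤ β) (hβn : β < n) (hlam : 0 < lam)
    (j : ℕ) (hj2 : 2 ≤ j) (hj : (n : ℝ) / 2 ≤ j) :
    MonotoneOn (fun t : ℝ =>
      (Real.exp (lam * t ^ ((n : ℝ) / ((n : ℝ) - 2))) -
        ∑ k ∈ Finset.range (j - 1),
          (lam * t ^ ((n : ℝ) / ((n : ℝ) - 2))) ^ k / (Nat.factorial k)) /
      (1 + t ^ (((n : ℝ) / ((n : ℝ) - 2)) * (1 - β / n)))) (Set.Ici 0) := by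
  set p : ℝ := (n : ℝ) / ((n : ℝ) - 2) with hp_def
  set q : ℝ := p * (1 - β / n) with hq_def
  have hn2 : (0:ℝ) < (n : ℝ) - 2 := by
    have : (3:ℝ) ≤ n := by exact_mod_cast hn
    linarith
  have hnpos : (0:ℝ) < n := by linarith
  have hp : 0 < p := div_pos hnpos hn2
  have hβr : β / n < 1 := (div_lt_one hnpos).mpr hβn
  have hq0 : 0 ≤ q := by
    have : 0 ≤ 1 - β / n := by linarith
    positivity
  have hq1 : q ≤ p := by
    have h0 : 0 ≤ β / n := by positivity
    have : 1 - β / n ≤ 1 := by linarith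
    calc q = p * (1 - β / n) := hq_def
      _ ≤ p * 1 := mul_le_mul_of_nonneg_left this hp.le
      _ = p := mul_one p
  intro a ha b hb hab
  simp only [Set.mem_Ici] at ha hb
  -- rewrite both sides as tsums
  have hrw : ∀ t : ℝ, 0 ≤ t →
      (Real.exp (lam * t ^ p) -
        ∑ k ∈ Finset.range (j - 1), (lam * t ^ p) ^ k / (Nat.factorial k : ℝ)) /
        (1 + t ^ q) =
      ∑' k : ℕ, (lam * t ^ p) ^ (k + (j - 1)) / (Nat.factorial (k + (j - 1)) : ℝ) /
        (1 + t ^ q) := by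
    intro t ht
    rw [exp_sub_sum (lam * t ^ p) (j - 1), tsum_div_const]
  have hsum : ∀ t : ℝ, 0 ≤ t →
      Summable (fun k : ℕ => (lam * t ^ p) ^ (k + (j - 1)) /
        (Nat.factorial (k + (j - 1)) : ℝ) / (1 + t ^ q)) := by
    intro t ht
    exact (((summable_nat_add_iff (j - 1)).mpr
      (Real.summable_pow_div_factorial (lam * t ^ p))).div_const _)
  simp only [hrw a ha, hrw b hb]
  refine Summable.tsum_le_tsum (fun k => ?_) (hsum a ha) (hsum b hb)
  refine term_mono hp.le hq0 (k + (j - 1)) ?_ hlam.le ha hab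
  have hK : (1:ℝ) ≤ (k + (j - 1) : ℕ) := by
    have : 1 ≤ k + (j - 1) := by omega
    exact_mod_cast this
  calc q ≤ p := hq1
    _ = p * 1 := (mul_one p).symm
    _ ≤ p * (k + (j - 1) : ℕ) := mul_le_mul_of_nonneg_left hK hp.le
end

section
/- Let n = 3 or n = 4, 0 ≤ β < n, λ > 0. Define h(t) = e^{λ t^{n/(n−2)}}·(λ t^{β/(n−2)} + λ t^{n/(n−2)} − (1 − β/n)) + (1 − β/n)·λ t^{n/(n−2)} for t ≥ 0. Then h is nondecreasing on (0, ∞) and h(t) ≥ 0 for all t ≥ 0. -/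
private lemma aux_deriv (p q c lam : ℝ) (t : ℝ) (ht : 0 < t) :
    HasDerivAt (fun t : ℝ =>
        Real.exp (lam * t ^ p) * (lam * t ^ q + lam * t ^ p - c) + c * (lam * t ^ p))
      (Real.exp (lam * t ^ p) * (lam * (p * t ^ (p-1))) * (lam * t ^ q + lam * t ^ p - c)
        + Real.exp (lam * t ^ p) * (lam * (q * t ^ (q-1)) + lam * (p * t ^ (p-1)))
        + c * (lam * (p * t ^ (p-1)))) t := by
  have hup : HasDerivAt (fun t : ℝ => t ^ p) (p * t ^ (p-1)) t :=
    Real.hasDerivAt_rpow_const (Or.inl ht.ne')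
  have huq : HasDerivAt (fun t : ℝ => t ^ q) (q * t ^ (q-1)) t :=
    Real.hasDerivAt_rpow_const (Or.inl ht.ne')
  have h1 : HasDerivAt (fun t : ℝ => lam * t ^ p) (lam * (p * t ^ (p-1))) t := hup.const_mul lam
  have h2 : HasDerivAt (fun t : ℝ => lam * t ^ q) (lam * (q * t ^ (q-1))) t := huq.const_mul lam
  have hexp : HasDerivAt (fun t : ℝ => Real.exp (lam * t ^ p))
      (Real.exp (lam * t ^ p) * (lam * (p * t ^ (p-1)))) t := h1.exp
  have hin : HasDerivAt (fun t : ℝ => lam * t ^ q + lam * t ^ p - c)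
      (lam * (q * t ^ (q-1)) + lam * (p * t ^ (p-1))) t := by
    simpa using (h2.add h1).sub_const c
  have h := (hexp.mul hin).add (h1.const_mul c)
  exact h

private lemma aux_nonneg (p q c lam t : ℝ) (hp : 0 < p) (hq : 0 ≤ q)
    (hc0 : 0 ≤ c) (hc1 : c ≤ 1) (hlam : 0 < lam) (ht : 0 < t) :
    0 ≤ Real.exp (lam * t ^ p) * (lam * (p * t ^ (p-1))) * (lam * t ^ q + lam * t ^ p - c)
        + Real.exp (lam * t ^ p) * (lam * (q * t ^ (q-1)) + lam * (p * t ^ (p-1)))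
        + c * (lam * (p * t ^ (p-1))) := by
  have hE : 0 < Real.exp (lam * t ^ p) := Real.exp_pos _
  have hA : 0 ≤ lam * (p * t ^ (p-1)) := by positivity
  have hB : 0 ≤ lam * (q * t ^ (q-1)) := by positivity
  have hs : 0 ≤ lam * t ^ q := by positivity
  have hu : 0 ≤ lam * t ^ p := by positivity
  nlinarith [mul_nonneg (mul_nonneg hE.le hA)
      (by linarith : (0:ℝ) ≤ lam * t ^ q + lam * t ^ p + 1 - c),
    mul_nonneg hE.le hB, mul_nonneg hc0 hA]

theorem stmt_2 (n : ℕ) (hn : n = 3 ∨ n = 4) (β lam : ℝ) (hβ : 0 ≤ β) (hβn : β < n)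
    (hlam : 0 < lam) :
    MonotoneOn (fun t : ℝ =>
        Real.exp (lam * t ^ ((n : ℝ) / ((n : ℝ) - 2))) *
          (lam * t ^ (β / ((n : ℝ) - 2)) + lam * t ^ ((n : ℝ) / ((n : ℝ) - 2)) - (1 - β / n)) +
        (1 - β / n) * (lam * t ^ ((n : ℝ) / ((n : ℝ) - 2)))) (Set.Ioi 0) ∧
    ∀ t : ℝ, 0 < t →
      0 ≤ deriv (fun t : ℝ =>
        Real.exp (lam * t ^ ((n : ℝ) / ((n : ℝ) - 2))) *
          (lam * t ^ (β / ((n : ℝ) - 2)) + lam * t ^ ((n : ℝ) / ((n : ℝ) - 2)) - (1 - β / n)) +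
        (1 - β / n) * (lam * t ^ ((n : ℝ) / ((n : ℝ) - 2)))) t := by
  have hn2 : (0:ℝ) < (n:ℝ) - 2 := by rcases hn with h | h <;> subst h <;> norm_num
  have hnpos : (0:ℝ) < (n:ℝ) := by linarith
  set p := (n:ℝ) / ((n:ℝ) - 2) with hpdef
  set q := β / ((n:ℝ) - 2) with hqdef
  set c := 1 - β / (n:ℝ) with hcdef
  have hp : 0 < p := div_pos (by linarith) hn2
  have hq : 0 ≤ q := div_nonneg hβ hn2.le
  have hc0 : 0 ≤ c := by
    have : β / (n:ℝ) < 1 := (div_lt_one hnpos).2 hβn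
    simp only [hcdef]; linarith
  have hc1 : c ≤ 1 := by
    have : 0 ≤ β / (n:ℝ) := div_nonneg hβ hnpos.le
    simp only [hcdef]; linarith
  have hderiv : ∀ t : ℝ, 0 < t →
      deriv (fun t : ℝ =>
        Real.exp (lam * t ^ p) * (lam * t ^ q + lam * t ^ p - c) + c * (lam * t ^ p)) t =
      Real.exp (lam * t ^ p) * (lam * (p * t ^ (p-1))) * (lam * t ^ q + lam * t ^ p - c)
        + Real.exp (lam * t ^ p) * (lam * (q * t ^ (q-1)) + lam * (p * t ^ (p-1)))
        + c * (lam * (p * t ^ (p-1))) := fun t ht => (aux_deriv p q c lam t ht).deriv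
  constructor
  · apply monotoneOn_of_deriv_nonneg (convex_Ioi 0)
    · intro t ht
      exact (aux_deriv p q c lam t ht).differentiableAt.continuousAt.continuousWithinAt
    · intro t ht
      rw [interior_Ioi] at ht
      exact (aux_deriv p q c lam t ht).differentiableAt.differentiableWithinAt
    · intro t ht
      rw [interior_Ioi] at ht
      rw [hderiv t ht]
      exact aux_nonneg p q c lam t hp hq hc0 hc1 hlam ht
  · intro t ht
    rw [hderiv t ht]
    exact aux_nonneg p q c lam t hp hq hc0 hc1 hlam ht
end

section
/- (Discrete exponential-weight lower bound) Let p > 1 and let a = (a_k)_{k≥0} be a sequence of nonnegative reals with Σ_k a_k = h > 1 and (Σ_k a_k^p)^(1/p) ≤ 1. Then there is a constant c = c(p) > 0, independent of a and h, such that (Σ_k a_k^p e^k)^(1/p) ≥ c · e^{h^{p/(p−1)}/p} / h^{1/(p−1)}. -/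
/-!
Split `∑ a_k` at `N ≈ h^{p'}`. By Hölder the first `N` terms sum to at most `N^{1/p'}`, so
the tail carries mass at least `h - N^{1/p'} ≥ h^{-1/(p-1)}`. Hölder once more, against the
weights `e^{k/p} · e^{-k/p}`, bounds the tail by `S^{1/p} e^{-N/p}` up to a constant, where
`S = ∑ a_k^p e^k`, and Bernoulli's inequality gives `N ≥ h^{p'} - p' - 1`.
-/

open Real
open scoped ENNReal

theorem one_sub_exp_neg_pos {t : ℝ} (ht : 0 < t) : 0 < 1 - exp (-t) :=
  sub_pos.2 (exp_lt_one_iff.2 (neg_neg_of_pos ht))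

theorem Summable.rpow_of_one_le {ι : Type*} {f : ι → ℝ} (hf : Summable f) (hf0 : ∀ i, 0 ≤ f i)
    {p : ℝ} (hp : 1 ≤ p) : Summable fun i => f i ^ p := by
  refine hf.of_norm_bounded_eventually ?_
  filter_upwards [hf.tendsto_cofinite_zero.eventually (gt_mem_nhds one_pos)] with i hi
  rw [Real.norm_of_nonneg (rpow_nonneg (hf0 i) p)]
  exact rpow_le_self_of_le_one (hf0 i) hi.le hp

theorem ENNReal.inner_le_Lp_mul_Lq_tsum {ι : Type*} {p q : ℝ} (hpq : p.HolderConjugate q)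
    (f g : ι → ℝ≥0∞) :
    ∑' i, f i * g i ≤ (∑' i, f i ^ p) ^ (1 / p) * (∑' i, g i ^ q) ^ (1 / q) := by
  let _ : MeasurableSpace ι := ⊤
  simpa [MeasureTheory.lintegral_count] using
    ENNReal.lintegral_mul_le_Lp_mul_Lq MeasureTheory.Measure.count hpq
      (Measurable.of_discrete (f := f)).aemeasurable (Measurable.of_discrete (f := g)).aemeasurable

theorem ENNReal.sum_le_tsum_rpow_mul_card_rpow {ι : Type*} {p q : ℝ} (hpq : p.HolderConjugate q)
    (f : ι → ℝ≥0∞) (s : Finset ι) :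
    ∑ i ∈ s, f i ≤ (∑' i, f i ^ p) ^ (1 / p) * (s.card : ℝ≥0∞) ^ (1 / q) := by
  have hs := ENNReal.inner_le_Lp_mul_Lq s f 1 hpq
  simp only [Pi.one_apply, mul_one, ENNReal.one_rpow, Finset.sum_const, nsmul_eq_mul] at hs
  refine hs.trans ?_
  gcongr
  · exact hpq.one_div_nonneg
  · exact ENNReal.sum_le_tsum s

theorem tsum_ofReal_exp_neg_mul_nat_add {t : ℝ} (ht : 0 < t) (N : ℕ) :
    ∑' k : ℕ, ENNReal.ofReal (exp (-(t * (k + N)))) =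
      ENNReal.ofReal (exp (-(t * N)) / (1 - exp (-t))) := by
  have hr : exp (-t) < 1 := sub_pos.1 (one_sub_exp_neg_pos ht)
  have hterm : ∀ k : ℕ, exp (-(t * (k + N))) = exp (-(t * N)) * exp (-t) ^ k := fun k => by
    rw [← exp_nat_mul, ← exp_add]; ring_nf
  simp_rw [hterm]
  rw [← ENNReal.ofReal_tsum_of_nonneg (fun k => by positivity)
      ((summable_geometric_of_lt_one (exp_pos _).le hr).mul_left _),
    tsum_mul_left, tsum_geometric_of_lt_one (exp_pos _).le hr, div_eq_mul_inv]

theorem ENNReal.tsum_nat_add_le_exp_weighted {p q : ℝ} (hpq : p.HolderConjugate q)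
    (f : ℕ → ℝ≥0∞) (N : ℕ) :
    ∑' k, f (k + N) ≤ (∑' k, f k ^ p * ENNReal.ofReal (exp k)) ^ (1 / p) *
      ENNReal.ofReal (exp (-(N / p)) / (1 - exp (-(q / p))) ^ (1 / q)) := by
  have hp := hpq.pos
  have hq := hpq.symm.pos
  have hsplit : ∀ k : ℕ, f (k + N) = f (k + N) * ENNReal.ofReal (exp ((k + N : ℕ) / p)) *
      ENNReal.ofReal (exp (-((k + N : ℕ) / p))) := fun k => by
    rw [mul_assoc, ← ENNReal.ofReal_mul (exp_pos _).le, ← exp_add, add_neg_cancel, exp_zero,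
      ENNReal.ofReal_one, mul_one]
  have hweighted : ∑' k, (f (k + N) * ENNReal.ofReal (exp ((k + N : ℕ) / p))) ^ p ≤
      ∑' k, f k ^ p * ENNReal.ofReal (exp k) := by
    have hpow : ∀ k : ℕ,
        (f k * ENNReal.ofReal (exp (k / p))) ^ p = f k ^ p * ENNReal.ofReal (exp k) := fun k => by
      rw [ENNReal.mul_rpow_of_nonneg _ _ hp.le, ENNReal.ofReal_rpow_of_nonneg (exp_pos _).le hp.le,
        ← exp_mul, div_mul_cancel₀ _ hp.ne']
    simp_rw [hpow]
    exact ENNReal.tsum_comp_le_tsum_of_injective (add_left_injective N) _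
  have hgeom : ∑' k : ℕ, ENNReal.ofReal (exp (-((k + N : ℕ) / p))) ^ q =
      ENNReal.ofReal (exp (-(q / p * N)) / (1 - exp (-(q / p)))) := by
    rw [← tsum_ofReal_exp_neg_mul_nat_add (div_pos hq hp) N]
    refine tsum_congr fun k => ?_
    rw [ENNReal.ofReal_rpow_of_nonneg (exp_pos _).le hq.le, ← exp_mul]
    push_cast
    ring_nf
  have hr := one_sub_exp_neg_pos (div_pos hq hp)
  have hroot : (exp (-(q / p * N)) / (1 - exp (-(q / p)))) ^ (1 / q) =
      exp (-(N / p)) / (1 - exp (-(q / p))) ^ (1 / q) := by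
    rw [div_rpow (exp_pos _).le hr.le, ← exp_mul]
    field_simp
  calc ∑' k, f (k + N)
      = ∑' k, f (k + N) * ENNReal.ofReal (exp ((k + N : ℕ) / p)) *
          ENNReal.ofReal (exp (-((k + N : ℕ) / p))) := tsum_congr hsplit
    _ ≤ _ := ENNReal.inner_le_Lp_mul_Lq_tsum hpq _ _
    _ ≤ _ := by
      rw [hgeom, ENNReal.ofReal_rpow_of_nonneg (by positivity) hpq.symm.one_div_nonneg, hroot]
      gcongr

theorem ENNReal.ofReal_sub_mul_exp_le_exp_weighted {p q : ℝ} (hpq : p.HolderConjugate q)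
    {f : ℕ → ℝ≥0∞} (hf : ∑' k, f k ^ p ≤ 1) {h : ℝ} (hsum : ∑' k, f k = ENNReal.ofReal h) (N : ℕ) :
    ENNReal.ofReal ((h - N ^ (1 / q)) * (exp (N / p) * (1 - exp (-(q / p))) ^ (1 / q))) ≤
      (∑' k, f k ^ p * ENNReal.ofReal (exp k)) ^ (1 / p) := by
  set S := (∑' k, f k ^ p * ENNReal.ofReal (exp k)) ^ (1 / p)
  set C := (1 - exp (-(q / p))) ^ (1 / q)
  have hC : 0 < C := rpow_pos_of_pos (one_sub_exp_neg_pos (div_pos hpq.symm.pos hpq.pos)) _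
  have hhead : ∑ k ∈ Finset.range N, f k ≤ ENNReal.ofReal (N ^ (1 / q)) := by
    calc ∑ k ∈ Finset.range N, f k
        ≤ (∑' k, f k ^ p) ^ (1 / p) * (N : ℝ≥0∞) ^ (1 / q) := by
          simpa using ENNReal.sum_le_tsum_rpow_mul_card_rpow hpq f (Finset.range N)
      _ ≤ 1 * (N : ℝ≥0∞) ^ (1 / q) := by
          gcongr
          exact ENNReal.rpow_le_one hf hpq.one_div_nonneg
      _ = ENNReal.ofReal (N ^ (1 / q)) := by
          rw [one_mul, ← ENNReal.ofReal_natCast,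
            ENNReal.ofReal_rpow_of_nonneg N.cast_nonneg hpq.symm.one_div_nonneg]
  have hsplit : ENNReal.ofReal h ≤
      ENNReal.ofReal (N ^ (1 / q)) + S * ENNReal.ofReal (exp (-(N / p)) / C) := by
    rw [← hsum, ← ENNReal.summable.sum_add_tsum_nat_add' (k := N)]
    exact add_le_add hhead (ENNReal.tsum_nat_add_le_exp_weighted hpq f N)
  have hcancel : exp (-(N / p)) / C * (exp (N / p) * C) = 1 := by
    rw [exp_neg]
    field_simp
  calc ENNReal.ofReal ((h - N ^ (1 / q)) * (exp (N / p) * C))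
      = ENNReal.ofReal (h - N ^ (1 / q)) * ENNReal.ofReal (exp (N / p) * C) :=
        ENNReal.ofReal_mul' (by positivity)
    _ ≤ S * ENNReal.ofReal (exp (-(N / p)) / C) * ENNReal.ofReal (exp (N / p) * C) := by
        gcongr
        rw [ENNReal.ofReal_sub _ (by positivity)]
        exact tsub_le_iff_left.2 hsplit
    _ = S := by
        rw [mul_assoc, ← ENNReal.ofReal_mul (by positivity), hcancel, ENNReal.ofReal_one, mul_one]

theorem sub_le_rpow_sub_rpow_one_sub {h q : ℝ} (hh : 1 ≤ h) (hq : 1 ≤ q) :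
    h ^ q - q ≤ (h - h ^ (1 - q)) ^ q := by
  have hh0 : 0 < h := zero_lt_one.trans_le hh
  have hs : -1 ≤ -h ^ (-q) := neg_le_neg (rpow_le_one_of_one_le_of_nonpos hh (by linarith))
  have hfactor : h - h ^ (1 - q) = h * (1 + -h ^ (-q)) := by
    rw [sub_eq_add_neg, rpow_sub hh0, rpow_one, rpow_neg hh0.le]
    ring
  have hcancel : h ^ q * h ^ (-q) = 1 := by rw [← rpow_add hh0, add_neg_cancel, rpow_zero]
  calc h ^ q - q = h ^ q * (1 + q * -h ^ (-q)) := by linear_combination q * hcancel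
    _ ≤ h ^ q * (1 + -h ^ (-q)) ^ q := by
        gcongr
        exact one_add_mul_self_le_rpow_one_add hs hq
    _ = (h - h ^ (1 - q)) ^ q := by
        rw [hfactor, mul_rpow hh0.le (by linarith)]

theorem exists_nat_rpow_le_sub_and_sub_le {h q : ℝ} (hh : 1 ≤ h) (hq : 1 < q) :
    ∃ N : ℕ, (N : ℝ) ^ (1 / q) ≤ h - h ^ (1 - q) ∧ h ^ q - (q + 1) ≤ N := by
  have hδ : 0 ≤ h - h ^ (1 - q) :=
    sub_nonneg.2 ((rpow_le_one_of_one_le_of_nonpos hh (by linarith)).trans hh)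
  refine ⟨⌊(h - h ^ (1 - q)) ^ q⌋₊, ?_, ?_⟩
  · calc (⌊(h - h ^ (1 - q)) ^ q⌋₊ : ℝ) ^ (1 / q) ≤ ((h - h ^ (1 - q)) ^ q) ^ (1 / q) := by
          gcongr
          exact Nat.floor_le (by positivity)
      _ = h - h ^ (1 - q) := by
          rw [← rpow_mul hδ, mul_one_div_cancel (by linarith), rpow_one]
  · linarith [sub_le_rpow_sub_rpow_one_sub hh hq.le, Nat.sub_one_lt_floor ((h - h ^ (1 - q)) ^ q)]

theorem stmt_4 (p : ℝ) (hp : 1 < p) :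
    ∃ c > 0, ∀ (a : ℕ → ℝ) (h : ℝ), (∀ k, 0 ≤ a k) → 1 < h →
      Summable a → (∑' k, a k) = h → (∑' k, a k ^ p) ≤ 1 →
      ENNReal.ofReal (c * Real.exp (h ^ (p / (p - 1)) / p) / h ^ (1 / (p - 1))) ≤
        (∑' k : ℕ, ENNReal.ofReal (a k ^ p * Real.exp k)) ^ (1 / p) := by
  set q := p / (p - 1)
  have hpq : p.HolderConjugate q := (holderConjugate_iff_eq_conjExponent hp).2 rfl
  have hq_sub_one : 1 / (p - 1) = q - 1 := by
    rw [div_eq_iff hpq.sub_one_ne_zero]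
    linear_combination -hpq.sub_one_mul_conj
  set C := (1 - exp (-(q / p))) ^ (1 / q)
  have hC : 0 < C := rpow_pos_of_pos (one_sub_exp_neg_pos (div_pos hpq.symm.pos hpq.pos)) _
  refine ⟨exp (-((q + 1) / p)) * C, by positivity, ?_⟩
  intro a h ha hh hsum hsum_eq hpow
  have hh0 : 0 < h := zero_lt_one.trans hh
  obtain ⟨N, hN_root, hN⟩ := exists_nat_rpow_le_sub_and_sub_le hh.le hpq.symm.lt
  have hpow' : ∑' k, ENNReal.ofReal (a k) ^ p ≤ 1 := by
    simp_rw [ENNReal.ofReal_rpow_of_nonneg (ha _) hpq.nonneg]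
    rw [← ENNReal.ofReal_tsum_of_nonneg (fun k => rpow_nonneg (ha k) p)
      (hsum.rpow_of_one_le ha hp.le)]
    exact ENNReal.ofReal_le_one.2 hpow
  have hsum' : ∑' k, ENNReal.ofReal (a k) = ENNReal.ofReal h := by
    rw [← hsum_eq, ENNReal.ofReal_tsum_of_nonneg ha hsum]
  have key := ENNReal.ofReal_sub_mul_exp_le_exp_weighted hpq hpow' hsum' N
  simp_rw [ENNReal.ofReal_rpow_of_nonneg (ha _) hpq.nonneg,
    ← ENNReal.ofReal_mul (rpow_nonneg (ha _) p)] at key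
  refine le_trans (ENNReal.ofReal_le_ofReal ?_) key
  calc exp (-((q + 1) / p)) * C * exp (h ^ q / p) / h ^ (1 / (p - 1))
      = h ^ (1 - q) * (exp ((h ^ q - (q + 1)) / p) * C) := by
        rw [hq_sub_one, show 1 - q = -(q - 1) by ring, rpow_neg hh0.le, sub_div, exp_sub, exp_neg]
        ring
    _ ≤ (h - N ^ (1 / q)) * (exp (N / p) * C) := by
        have hδ := rpow_pos_of_pos hh0 (1 - q)
        gcongr <;> linarith
end

section
/- (Discrete exponential-weight upper bound) Let p > 1. For every h > 1 there exists a sequence a = (a_k)_{k≥0} of nonnegative reals with Σ_k a_k = h and (Σ_k a_k^p)^(1/p) ≤ 1 such that (Σ_k a_k^p e^k)^(1/p) ≤ C · e^{h^{p/(p−1)}/p} / h^{1/(p−1)} for a constant C = C(p) independent of h. -/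
/-!
Spread the mass `h` evenly over the first `N = ⌈h ^ p'⌉` indices, `p' = p / (p - 1)`. Then
`∑ a_k ^ p = h ^ p / N ^ (p - 1) ≤ 1` because `N ^ (p - 1) ≥ h ^ (p' (p - 1)) = h ^ p`, while the
weighted sum is at most `(h / N) ^ p e ^ N` since `∑_{k < N} e ^ k ≤ e ^ N`. Taking `p`-th roots,
`h / N ≤ h ^ (1 - p') = h ^ (-1 / (p - 1))` and `e ^ (N / p) ≤ e · e ^ (h ^ p' / p)`.
-/

open Real Finset

lemma sum_range_pow_le_pow {R : Type*} [CommSemiring R] [PartialOrder R] [IsOrderedRing R]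
    {r : R} (hr : 2 ≤ r) (N : ℕ) : ∑ k ∈ range N, r ^ k ≤ r ^ N := by
  induction N with
  | zero => simp
  | succ N ih =>
    have hpow : 0 ≤ r ^ N := pow_nonneg (zero_le_two.trans hr) N
    calc ∑ k ∈ range (N + 1), r ^ k = ∑ k ∈ range N, r ^ k + r ^ N := sum_range_succ _ _
      _ ≤ 2 * r ^ N := by rw [two_mul]; exact add_le_add_left ih _
      _ ≤ r ^ (N + 1) := by rw [pow_succ']; exact mul_le_mul_of_nonneg_right hr hpow

lemma sum_range_exp_le (N : ℕ) : ∑ k ∈ range N, exp k ≤ exp N := by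
  have htwo : (2 : ℝ) ≤ exp 1 := by linarith [add_one_le_exp (1 : ℝ)]
  simpa only [exp_one_pow] using sum_range_pow_le_pow htwo N

def flat (N : ℕ) (c : ℝ) : ℕ → ℝ := fun k => if k < N then c else 0

namespace flat

variable {N : ℕ} {c : ℝ}

lemma nonneg (hc : 0 ≤ c) (k : ℕ) : 0 ≤ flat N c k := by
  unfold flat; split_ifs <;> simp [hc]

lemma rpow {p : ℝ} (hp : p ≠ 0) (k : ℕ) : flat N c k ^ p = flat N (c ^ p) k := by
  unfold flat; split_ifs <;> simp [zero_rpow hp]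

lemma mul_eq_zero_of_not_mem (g : ℕ → ℝ) {k : ℕ} (hk : k ∉ range N) : flat N c k * g k = 0 := by
  simp_all [flat]

lemma summable_mul (g : ℕ → ℝ) : Summable fun k => flat N c k * g k :=
  summable_of_ne_finset_zero fun _ => mul_eq_zero_of_not_mem g

lemma tsum_mul (g : ℕ → ℝ) : ∑' k, flat N c k * g k = c * ∑ k ∈ range N, g k := by
  rw [tsum_eq_sum fun _ => mul_eq_zero_of_not_mem g, mul_sum]
  exact sum_congr rfl fun k hk => by simp_all [flat]

lemma summable : Summable (flat N c) := by
  simpa using summable_mul (N := N) (c := c) fun _ => 1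

lemma tsum_eq : ∑' k, flat N c k = N * c := by
  simpa [mul_comm] using tsum_mul (N := N) (c := c) fun _ => 1

lemma tsum_rpow_mul_exp_rpow_le (hc : 0 ≤ c) {p : ℝ} (hp : 0 < p) :
    (∑' k, flat N c k ^ p * exp k) ^ (1 / p) ≤ c * exp (N / p) := by
  have hcp : 0 ≤ c ^ p := rpow_nonneg hc p
  simp_rw [rpow hp.ne', tsum_mul]
  calc (c ^ p * ∑ k ∈ range N, exp k) ^ (1 / p) ≤ (c ^ p * exp N) ^ (1 / p) := by
        gcongr
        exact sum_range_exp_le N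
    _ = c * exp (N / p) := by
        rw [mul_rpow hcp (exp_pos _).le, ← rpow_mul hc, mul_one_div_cancel hp.ne', rpow_one,
          ← exp_mul, mul_one_div]

end flat

section ConjugateExponent

variable {p h : ℝ}

lemma rpow_conj_eq_mul (hp : 1 < p) (hh : 0 < h) : h ^ (p / (p - 1)) = h * h ^ (1 / (p - 1)) := by
  have hp1 : p - 1 ≠ 0 := by linarith
  rw [show p / (p - 1) = 1 + 1 / (p - 1) by field_simp; ring, rpow_add hh, rpow_one]

lemma rpow_conj_rpow_sub_one (hp : 1 < p) (hh : 0 ≤ h) : (h ^ (p / (p - 1))) ^ (p - 1) = h ^ p := by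
  have hp1 : p - 1 ≠ 0 := by linarith
  rw [← rpow_mul hh, div_mul_cancel₀ p hp1]

variable {N : ℝ}

lemma mul_div_rpow_le_one (hp : 1 < p) (hh : 0 ≤ h) (hN : h ^ (p / (p - 1)) ≤ N) (hN0 : 0 < N) :
    N * (h / N) ^ p ≤ 1 := by
  have hpow : h ^ p ≤ N ^ (p - 1) := by
    rw [← rpow_conj_rpow_sub_one hp hh]
    exact rpow_le_rpow (rpow_nonneg hh _) hN (by linarith)
  rw [div_rpow hh hN0.le, rpow_sub_one hN0.ne'] at *
  rw [le_div_iff₀ hN0] at hpow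
  rwa [mul_div_assoc', div_le_one (rpow_pos_of_pos hN0 p), mul_comm]

lemma div_le_one_div_rpow (hp : 1 < p) (hh : 0 < h) (hN : h ^ (p / (p - 1)) ≤ N) (hN0 : 0 < N) :
    h / N ≤ 1 / h ^ (1 / (p - 1)) := by
  rw [div_le_div_iff₀ hN0 (rpow_pos_of_pos hh _), one_mul, ← rpow_conj_eq_mul hp hh]
  exact hN

end ConjugateExponent

theorem stmt_5 (p : ℝ) (hp : 1 < p) :
    ∃ C > 0, ∀ h : ℝ, 1 < h → ∃ a : ℕ → ℝ,
      (∀ k, 0 ≤ a k) ∧ Summable a ∧ (∑' k, a k) = h ∧ (∑' k, a k ^ p) ≤ 1 ∧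
      Summable (fun k : ℕ => a k ^ p * Real.exp k) ∧
      (∑' k : ℕ, a k ^ p * Real.exp k) ^ (1 / p) ≤
        C * Real.exp (h ^ (p / (p - 1)) / p) / h ^ (1 / (p - 1)) := by
  have hp0 : 0 < p := one_pos.trans hp
  refine ⟨exp 1, exp_pos 1, fun h hh => ?_⟩
  have hh0 : 0 < h := one_pos.trans hh
  set x := h ^ (p / (p - 1))
  set N := ⌈x⌉₊
  have hxN : x ≤ N := Nat.le_ceil x
  have hN0 : (0 : ℝ) < N := (rpow_pos_of_pos hh0 _).trans_le hxN
  have hNx : (N : ℝ) < x + 1 := Nat.ceil_lt_add_one (rpow_nonneg hh0.le _)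
  have hc : 0 ≤ h / N := by positivity
  have hexp : exp (N / p) ≤ exp 1 * exp (x / p) := by
    rw [← exp_add, exp_le_exp, div_le_iff₀ hp0, add_mul, div_mul_cancel₀ _ hp0.ne']
    linarith
  refine ⟨flat N (h / N), flat.nonneg hc, flat.summable, ?_, ?_, ?_, ?_⟩
  · rw [flat.tsum_eq]; field_simp
  · simpa [flat.rpow hp0.ne', flat.tsum_eq] using mul_div_rpow_le_one hp hh0.le hxN hN0
  · simpa only [flat.rpow hp0.ne'] using flat.summable_mul (N := N) (c := (h / N) ^ p) (exp ·)
  calc (∑' k, flat N (h / N) k ^ p * exp k) ^ (1 / p) ≤ h / N * exp (N / p) :=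
        flat.tsum_rpow_mul_exp_rpow_le hc hp0
    _ ≤ 1 / h ^ (1 / (p - 1)) * (exp 1 * exp (x / p)) :=
        mul_le_mul (div_le_one_div_rpow hp hh0 hxN hN0) hexp (exp_pos _).le (by positivity)
    _ = exp 1 * exp (x / p) / h ^ (1 / (p - 1)) := by ring
end

section
/- (Asymptotics of the L^{n/2}-norm of the Moser-type test functions) Let n ≥ 3, let F° be a Finsler norm on ℝⁿ with unit-ball volume κ_n = |{F° ≤ 1}|, and let λ_n = n^{n/(n−2)}(n−2)^{n/(n−2)} κ_n^{2/(n−2)}. For small ε > 0 define u_ε(x) = (ln(1/ε)/λ_n)^{(n−2)/n} − F°(x)²/(ε ln(1/ε))^{2/n} + (ln(1/ε))^{−2/n} for F°(x) ≤ ε^{1/n}; u_ε(x) = n λ_n^{2/n−1} (ln(1/ε))^{−2/n} ln(1/F°(x)) for ε^{1/n} ≤ F°(x) ≤ 1; and u_ε = 0 for F°(x) > 1. Then ∫_{ℝⁿ} |u_ε|^{n/2} dx = O(1/ln(1/ε)) as ε → 0. -/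
/-!
Write `L = log (1 / ε)`, so that `ε = exp (-L)`. On the inner ball `{F° ≤ ε ^ (1 / n)}`, whose
volume is `ε κ` by homogeneity, `|u_ε| = O(L)`, and `exp (-L)` beats every power of `L`. On the
annulus `|u_ε| ^ (n / 2)` is `L⁻¹` times a constant times `log (1 / F°) ^ (n / 2)`, which is
integrable on `{F° ≤ 1}` by the layer-cake formula, because `|{F° ≤ exp (-t)}| = κ exp (-n t)`.
-/

open MeasureTheory Real Set Pointwise

section PositivelyHomogeneous

variable {E : Type*} [NormedAddCommGroup E] [NormedSpace ℝ E] {F : E → ℝ}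

lemma map_zero_of_homogeneous (hhom : ∀ t : ℝ, 0 ≤ t → ∀ ξ, F (t • ξ) = t * F ξ) : F 0 = 0 := by
  simpa using hhom 0 le_rfl 0

lemma nonneg_of_homogeneous (hhom : ∀ t : ℝ, 0 ≤ t → ∀ ξ, F (t • ξ) = t * F ξ)
    (hpos : ∀ ξ, ξ ≠ 0 → 0 < F ξ) (x : E) : 0 ≤ F x := by
  rcases eq_or_ne x 0 with rfl | hx
  · exact (map_zero_of_homogeneous hhom).ge
  · exact (hpos x hx).le

variable [FiniteDimensional ℝ E]

lemma exists_pos_mul_norm_le_of_homogeneous (hF : Continuous F)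
    (hhom : ∀ t : ℝ, 0 ≤ t → ∀ ξ, F (t • ξ) = t * F ξ) (hpos : ∀ ξ, ξ ≠ 0 → 0 < F ξ) :
    ∃ m > 0, ∀ x, m * ‖x‖ ≤ F x := by
  rcases subsingleton_or_nontrivial E with hE | hE
  · refine ⟨1, one_pos, fun x => ?_⟩
    simp [Subsingleton.elim x 0, map_zero_of_homogeneous hhom]
  obtain ⟨x₀, hx₀, hmin⟩ := (isCompact_sphere (0 : E) 1).exists_isMinOn
    (NormedSpace.sphere_nonempty.mpr zero_le_one) hF.continuousOn
  refine ⟨F x₀, hpos x₀ (ne_zero_of_mem_unit_sphere ⟨x₀, hx₀⟩), fun x => ?_⟩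
  rcases eq_or_ne x 0 with rfl | hx
  · simp [map_zero_of_homogeneous hhom]
  have hnx : 0 < ‖x‖ := norm_pos_iff.mpr hx
  have hunit : ‖x‖⁻¹ • x ∈ Metric.sphere (0 : E) 1 := by simp [norm_smul, hnx.ne']
  calc F x₀ * ‖x‖ ≤ F (‖x‖⁻¹ • x) * ‖x‖ := by gcongr; exact hmin hunit
    _ = F x := by rw [hhom _ (inv_nonneg.mpr hnx.le)]; field_simp

variable [MeasurableSpace E] (μ : Measure E) [μ.IsAddHaarMeasure]

lemma measure_sublevel_one_lt_top_of_homogeneous (hF : Continuous F)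
    (hhom : ∀ t : ℝ, 0 ≤ t → ∀ ξ, F (t • ξ) = t * F ξ) (hpos : ∀ ξ, ξ ≠ 0 → 0 < F ξ) :
    μ {x | F x ≤ 1} < ⊤ := by
  obtain ⟨m, hm, hle⟩ := exists_pos_mul_norm_le_of_homogeneous hF hhom hpos
  refine (Metric.isBounded_closedBall (x := (0 : E)) (r := m⁻¹)).subset (fun x hx => ?_)
    |>.measure_lt_top
  rw [mem_closedBall_zero_iff, ← one_div, le_div_iff₀' hm]
  exact (hle x).trans hx

lemma measure_sublevel_eq_of_homogeneous [BorelSpace E]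
    (hhom : ∀ t : ℝ, 0 ≤ t → ∀ ξ, F (t • ξ) = t * F ξ) {r : ℝ} (hr : 0 < r) :
    μ {x | F x ≤ r} = ENNReal.ofReal (r ^ Module.finrank ℝ E) * μ {x | F x ≤ 1} := by
  have hscale : {x | F x ≤ r} = r • {x | F x ≤ 1} := by
    ext x
    rw [mem_smul_set_iff_inv_smul_mem₀ hr.ne', mem_ofPred_eq, mem_ofPred_eq,
      hhom _ (inv_nonneg.mpr hr.le), inv_mul_le_one₀ hr]
  rw [hscale, Measure.addHaar_smul_of_nonneg μ hr.le]

end PositivelyHomogeneous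

lemma integrableOn_log_inv_rpow {α : Type*} [MeasurableSpace α] {μ : Measure α} {g : α → ℝ}
    (hg : Measurable g) (hg0 : ∀ x, 0 ≤ g x) {K s p : ℝ} (hs : 0 < s) (hp : 0 < p)
    (hvol : ∀ r ∈ Ioo (0 : ℝ) 1, μ {x | g x ≤ r} ≤ ENNReal.ofReal (K * r ^ s)) :
    IntegrableOn (fun x => log (1 / g x) ^ p) {x | g x ≤ 1} μ := by
  have hB : MeasurableSet {x | g x ≤ 1} := measurableSet_le hg measurable_const
  have hlog : Measurable fun x => log (1 / g x) := measurable_log.comp (measurable_const.div hg)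
  have hlog_nonneg : 0 ≤ᵐ[μ.restrict {x | g x ≤ 1}] fun x => log (1 / g x) := by
    filter_upwards [ae_restrict_mem hB] with x hx
    show 0 ≤ log (1 / g x)
    rw [one_div, log_inv, neg_nonneg]
    exact log_nonpos (hg0 x) hx
  have hlevel : ∀ t ∈ Ioi (0 : ℝ), μ.restrict {x | g x ≤ 1} {x | t ≤ log (1 / g x)} ≤
      ENNReal.ofReal (K * exp (-t) ^ s) := by
    intro t (ht : 0 < t)
    refine (Measure.restrict_apply_le _ _).trans <| (measure_mono fun x hx => ?_).trans
      (hvol _ ⟨exp_pos _, exp_lt_one_iff.mpr (neg_lt_zero.mpr ht)⟩)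
    have hx : t ≤ log (1 / g x) := hx
    rcases (hg0 x).eq_or_lt with h0 | hpos
    · exact (h0 ▸ exp_pos _).le
    · rw [one_div, log_inv, le_neg] at hx
      exact (log_le_iff_le_exp hpos).mp hx
  have hGamma : IntegrableOn (fun t : ℝ => K * (t ^ (p - 1) * exp (-s * t ^ (1 : ℝ)))) (Ioi 0) :=
    (integrableOn_rpow_mul_exp_neg_mul_rpow (by linarith) one_pos hs).const_mul K
  refine ⟨(hlog.pow_const p).aestronglyMeasurable,
    (hasFiniteIntegral_iff_ofReal (hlog_nonneg.mono fun x hx => rpow_nonneg hx p)).mpr ?_⟩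
  rw [lintegral_rpow_eq_lintegral_meas_le_mul _ hlog_nonneg hlog.aemeasurable hp]
  refine ENNReal.mul_lt_top ENNReal.ofReal_lt_top <| lt_of_le_of_lt ?_ hGamma.lintegral_lt_top
  refine setLIntegral_mono' measurableSet_Ioi fun t ht => ?_
  calc μ.restrict {x | g x ≤ 1} {x | t ≤ log (1 / g x)} * ENNReal.ofReal (t ^ (p - 1))
      ≤ ENNReal.ofReal (K * exp (-t) ^ s) * ENNReal.ofReal (t ^ (p - 1)) := by
        gcongr; exact hlevel t ht
    _ = ENNReal.ofReal (K * (t ^ (p - 1) * exp (-s * t ^ (1 : ℝ)))) := by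
        rw [← ENNReal.ofReal_mul' (rpow_nonneg (le_of_lt ht) _), rpow_one, ← exp_mul]
        ring_nf

/-- `moserProfile n λ ε (F° x)` is the test function `u_ε(x)`. -/
noncomputable def moserProfile (n : ℕ) (lam ε t : ℝ) : ℝ :=
  if t ≤ ε ^ (1 / (n : ℝ)) then
    (Real.log (1 / ε) / lam) ^ (((n : ℝ) - 2) / n) -
      t ^ 2 / (ε * Real.log (1 / ε)) ^ (2 / (n : ℝ)) + (Real.log (1 / ε)) ^ (-(2 / (n : ℝ)))
  else if t ≤ 1 then
    (n : ℝ) * lam ^ (2 / (n : ℝ) - 1) * (Real.log (1 / ε)) ^ (-(2 / (n : ℝ))) * Real.log (1 / t)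
  else 0

lemma log_one_div_nonneg {t : ℝ} (ht0 : 0 ≤ t) (ht1 : t ≤ 1) : 0 ≤ log (1 / t) := by
  rw [one_div, log_inv, neg_nonneg]
  exact log_nonpos ht0 ht1

section MoserProfile

variable {n : ℕ} {lam ε t : ℝ}

lemma abs_moserProfile_le (hn : 0 < n) (hε : 0 < ε) (hL : 1 ≤ log (1 / ε)) (ht0 : 0 ≤ t)
    (ht : t ≤ ε ^ (1 / (n : ℝ))) :
    |moserProfile n lam ε t| ≤ (|lam|⁻¹ ^ (((n : ℝ) - 2) / n) + 2) * log (1 / ε) := by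
  set L := log (1 / ε)
  have hn' : (0 : ℝ) < n := Nat.cast_pos.mpr hn
  have hL0 : 0 < L := one_pos.trans_le hL
  have hlead : |(L / lam) ^ (((n : ℝ) - 2) / n)| ≤ |lam|⁻¹ ^ (((n : ℝ) - 2) / n) * L := by
    calc |(L / lam) ^ (((n : ℝ) - 2) / n)| ≤ |L / lam| ^ (((n : ℝ) - 2) / n) :=
          abs_rpow_le_abs_rpow _ _
      _ = L ^ (((n : ℝ) - 2) / n) * |lam|⁻¹ ^ (((n : ℝ) - 2) / n) := by
          rw [abs_div, abs_of_pos hL0, div_eq_mul_inv,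
            mul_rpow hL0.le (inv_nonneg.mpr (abs_nonneg _))]
      _ ≤ L ^ (1 : ℝ) * |lam|⁻¹ ^ (((n : ℝ) - 2) / n) := by
          gcongr
          rw [div_le_one hn']; linarith
      _ = |lam|⁻¹ ^ (((n : ℝ) - 2) / n) * L := by rw [rpow_one, mul_comm]
  have hcorr_le : L ^ (-(2 / (n : ℝ))) ≤ 1 :=
    rpow_le_one_of_one_le_of_nonpos hL (neg_nonpos.mpr (by positivity))
  have hcorr_nonneg : 0 ≤ L ^ (-(2 / (n : ℝ))) := rpow_nonneg hL0.le _
  have hquad : t ^ 2 / (ε * L) ^ (2 / (n : ℝ)) ≤ L ^ (-(2 / (n : ℝ))) := by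
    have ht2 : t ^ 2 ≤ ε ^ (2 / (n : ℝ)) := by
      calc t ^ 2 ≤ (ε ^ (1 / (n : ℝ))) ^ 2 := by gcongr
        _ = ε ^ (2 / (n : ℝ)) := by
          rw [← rpow_natCast, ← rpow_mul hε.le]; ring_nf
    rw [mul_rpow hε.le hL0.le, rpow_neg hL0.le, ← div_div, div_eq_mul_inv _ (L ^ _)]
    exact mul_le_of_le_one_left (by positivity) ((div_le_one (rpow_pos_of_pos hε _)).mpr ht2)
  have hquad_nonneg : 0 ≤ t ^ 2 / (ε * L) ^ (2 / (n : ℝ)) := by positivity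
  rw [moserProfile, if_pos ht, abs_le]
  rw [abs_le] at hlead
  constructor <;> linarith

lemma rpow_abs_moserProfile_of_lt_of_le (hn : 0 < n) (hL : 0 < log (1 / ε))
    (ht : ε ^ (1 / (n : ℝ)) < t) (ht1 : t ≤ 1) (ht0 : 0 ≤ t) :
    |moserProfile n lam ε t| ^ ((n : ℝ) / 2) =
      |(n : ℝ) * lam ^ (2 / (n : ℝ) - 1)| ^ ((n : ℝ) / 2) / log (1 / ε) *
        log (1 / t) ^ ((n : ℝ) / 2) := by
  have hn' : (0 : ℝ) < n := Nat.cast_pos.mpr hn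
  have hcorr : (log (1 / ε) ^ (-(2 / (n : ℝ)))) ^ ((n : ℝ) / 2) = (log (1 / ε))⁻¹ := by
    rw [← rpow_mul hL.le, show -(2 / (n : ℝ)) * (n / 2) = -1 by field_simp, rpow_neg_one]
  rw [moserProfile, if_neg ht.not_ge, if_pos ht1, abs_mul, abs_mul,
    abs_of_nonneg (rpow_nonneg hL.le _), abs_of_nonneg (log_one_div_nonneg ht0 ht1),
    mul_rpow (by positivity) (log_one_div_nonneg ht0 ht1),
    mul_rpow (abs_nonneg _) (rpow_nonneg hL.le _), hcorr]
  ring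

lemma rpow_abs_moserProfile_le_indicator (hn : 0 < n) (hε : 0 < ε) (hL : 1 ≤ log (1 / ε))
    (ht0 : 0 ≤ t) :
    |moserProfile n lam ε t| ^ ((n : ℝ) / 2) ≤
      (Iic (ε ^ (1 / (n : ℝ)))).indicator
          (fun _ => ((|lam|⁻¹ ^ (((n : ℝ) - 2) / n) + 2) * log (1 / ε)) ^ ((n : ℝ) / 2)) t +
        (Iic 1).indicator (fun s => |(n : ℝ) * lam ^ (2 / (n : ℝ) - 1)| ^ ((n : ℝ) / 2) /
          log (1 / ε) * log (1 / s) ^ ((n : ℝ) / 2)) t := by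
  have hL0 : 0 < log (1 / ε) := one_pos.trans_le hL
  have hmid_nonneg : 0 ≤ (Iic 1).indicator (fun s => |(n : ℝ) * lam ^ (2 / (n : ℝ) - 1)| ^
      ((n : ℝ) / 2) / log (1 / ε) * log (1 / s) ^ ((n : ℝ) / 2)) t := by
    rw [indicator_apply]
    split_ifs with ht1
    · have := log_one_div_nonneg ht0 ht1
      positivity
    · rfl
  by_cases hinner : t ≤ ε ^ (1 / (n : ℝ))
  · rw [indicator_of_mem (show t ∈ Iic _ from hinner)]
    refine le_add_of_le_of_nonneg ?_ hmid_nonneg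
    exact rpow_le_rpow (abs_nonneg _) (abs_moserProfile_le hn hε hL ht0 hinner) (by positivity)
  rw [indicator_of_notMem (show t ∉ Iic _ from hinner), zero_add]
  by_cases hmid : t ≤ 1
  · rw [indicator_of_mem (show t ∈ Iic 1 from hmid),
      rpow_abs_moserProfile_of_lt_of_le hn hL0 (not_le.mp hinner) hmid ht0]
  · rw [indicator_of_notMem (show t ∉ Iic 1 from hmid), moserProfile, if_neg hinner, if_neg hmid,
      abs_zero, zero_rpow (by positivity)]

end MoserProfile

lemma exp_neg_mul_pow_le {L : ℝ} (hL : 0 < L) (k : ℕ) :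
    exp (-L) * L ^ k ≤ (k + 1).factorial / L := by
  have h := pow_div_factorial_le_exp L hL.le (k + 1)
  rw [div_le_iff₀ (by positivity)] at h
  rw [le_div_iff₀ hL, mul_assoc, ← pow_succ, exp_neg, inv_mul_le_iff₀ (exp_pos L)]
  exact h

section Estimate

variable {E : Type*} [NormedAddCommGroup E] [NormedSpace ℝ E] [FiniteDimensional ℝ E]
  [MeasurableSpace E] [BorelSpace E] (μ : Measure E) [μ.IsAddHaarMeasure] {F : E → ℝ}

lemma integral_rpow_abs_moserProfile_le (hF : Continuous F)
    (hhom : ∀ t : ℝ, 0 ≤ t → ∀ ξ, F (t • ξ) = t * F ξ) (hpos : ∀ ξ, ξ ≠ 0 → 0 < F ξ)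
    {n : ℕ} (hn : 0 < n) (hdim : Module.finrank ℝ E = n) (lam : ℝ) {ε : ℝ} (hε : 0 < ε)
    (hL : 1 ≤ log (1 / ε)) :
    ∫ x, |moserProfile n lam ε (F x)| ^ ((n : ℝ) / 2) ∂μ ≤
      ((|lam|⁻¹ ^ (((n : ℝ) - 2) / n) + 2) * log (1 / ε)) ^ ((n : ℝ) / 2) *
          (ε * μ.real {x | F x ≤ 1}) +
        |(n : ℝ) * lam ^ (2 / (n : ℝ) - 1)| ^ ((n : ℝ) / 2) / log (1 / ε) *
          ∫ x in {x | F x ≤ 1}, log (1 / F x) ^ ((n : ℝ) / 2) ∂μ := by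
  have hF0 := nonneg_of_homogeneous hhom hpos
  have hfin := measure_sublevel_one_lt_top_of_homogeneous μ hF hhom hpos
  have hsub : ∀ r, 0 < r → μ {x | F x ≤ r} = ENNReal.ofReal (r ^ n) * μ {x | F x ≤ 1} :=
    fun r hr => hdim ▸ measure_sublevel_eq_of_homogeneous μ hhom hr
  have hmeas : ∀ r, MeasurableSet {x | F x ≤ r} := fun r =>
    measurableSet_le hF.measurable measurable_const
  have hlog : IntegrableOn (fun x => log (1 / F x) ^ ((n : ℝ) / 2)) {x | F x ≤ 1} μ := by
    refine integrableOn_log_inv_rpow hF.measurable hF0 (K := μ.real {x | F x ≤ 1})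
      (Nat.cast_pos.mpr hn) (by positivity) fun r hr => ?_
    rw [hsub r hr.1, measureReal_def, ENNReal.ofReal_mul ENNReal.toReal_nonneg,
      ENNReal.ofReal_toReal hfin.ne, rpow_natCast, mul_comm]
  have hinner : μ.real {x | F x ≤ ε ^ (1 / (n : ℝ))} = ε * μ.real {x | F x ≤ 1} := by
    rw [measureReal_def, measureReal_def, hsub _ (rpow_pos_of_pos hε _), ENNReal.toReal_mul,
      ENNReal.toReal_ofReal (by positivity), ← rpow_natCast, ← rpow_mul hε.le,
      one_div_mul_cancel (Nat.cast_pos.mpr hn).ne', rpow_one]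
  have hinner_fin : μ {x | F x ≤ ε ^ (1 / (n : ℝ))} ≠ ⊤ := by
    rw [hsub _ (rpow_pos_of_pos hε _)]
    exact ENNReal.mul_ne_top ENNReal.ofReal_ne_top hfin.ne
  have hint_inner := (integrableOn_const (C := ((|lam|⁻¹ ^ (((n : ℝ) - 2) / n) + 2) *
    log (1 / ε)) ^ ((n : ℝ) / 2)) hinner_fin).integrable_indicator (hmeas _)
  have hint_mid := IntegrableOn.integrable_indicator
    (hlog.const_mul (|(n : ℝ) * lam ^ (2 / (n : ℝ) - 1)| ^ ((n : ℝ) / 2) / log (1 / ε))) (hmeas 1)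
  calc ∫ x, |moserProfile n lam ε (F x)| ^ ((n : ℝ) / 2) ∂μ
      ≤ ∫ x, ({x | F x ≤ ε ^ (1 / (n : ℝ))}.indicator
            (fun _ => ((|lam|⁻¹ ^ (((n : ℝ) - 2) / n) + 2) * log (1 / ε)) ^ ((n : ℝ) / 2)) x +
          {x | F x ≤ 1}.indicator (fun x => |(n : ℝ) * lam ^ (2 / (n : ℝ) - 1)| ^ ((n : ℝ) / 2) /
            log (1 / ε) * log (1 / F x) ^ ((n : ℝ) / 2)) x) ∂μ := by
        refine integral_mono_of_nonneg (ae_of_all _ fun x => rpow_nonneg (abs_nonneg _) _)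
          (hint_inner.add hint_mid) (ae_of_all _ fun x => ?_)
        exact rpow_abs_moserProfile_le_indicator hn hε hL (hF0 x)
    _ = _ := by
        rw [integral_add hint_inner hint_mid,
          integral_indicator_const _ (hmeas _), integral_indicator (hmeas 1), integral_const_mul,
          hinner, smul_eq_mul, mul_comm]

lemma exists_integral_rpow_abs_moserProfile_le (hF : Continuous F)
    (hhom : ∀ t : ℝ, 0 ≤ t → ∀ ξ, F (t • ξ) = t * F ξ) (hpos : ∀ ξ, ξ ≠ 0 → 0 < F ξ)
    {n : ℕ} (hn : 0 < n) (hdim : Module.finrank ℝ E = n) (lam : ℝ) :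
    ∃ C > 0, ∀ ε, 0 < ε → 1 ≤ log (1 / ε) →
      ∫ x, |moserProfile n lam ε (F x)| ^ ((n : ℝ) / 2) ∂μ ≤ C / log (1 / ε) := by
  set c₁ := |lam|⁻¹ ^ (((n : ℝ) - 2) / n) + 2
  set c₂ := |(n : ℝ) * lam ^ (2 / (n : ℝ) - 1)| ^ ((n : ℝ) / 2)
  set V := μ.real {x | F x ≤ 1}
  set J := ∫ x in {x | F x ≤ 1}, log (1 / F x) ^ ((n : ℝ) / 2) ∂μ
  have hJ : 0 ≤ J := setIntegral_nonneg (measurableSet_le hF.measurable measurable_const)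
    fun x hx => rpow_nonneg (log_one_div_nonneg (nonneg_of_homogeneous hhom hpos x) hx) _
  refine ⟨c₁ ^ ((n : ℝ) / 2) * (n + 1).factorial * V + c₂ * J + 1, by positivity,
    fun ε hε hL => (integral_rpow_abs_moserProfile_le μ hF hhom hpos hn hdim lam hε hL).trans ?_⟩
  set L := log (1 / ε) with hL_def
  have hL0 : 0 < L := one_pos.trans_le hL
  have hsmall : ε * L ^ ((n : ℝ) / 2) ≤ (n + 1).factorial / L := by
    have hεL : ε = exp (-L) := by rw [hL_def, one_div, log_inv, neg_neg, exp_log hε]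
    calc ε * L ^ ((n : ℝ) / 2) ≤ ε * L ^ (n : ℝ) := by
          gcongr
          linarith [(Nat.cast_nonneg n : (0 : ℝ) ≤ n)]
      _ ≤ (n + 1).factorial / L := by
          rw [rpow_natCast, hεL]
          exact exp_neg_mul_pow_le hL0 n
  calc (c₁ * L) ^ ((n : ℝ) / 2) * (ε * V) + c₂ / L * J
      = c₁ ^ ((n : ℝ) / 2) * V * (ε * L ^ ((n : ℝ) / 2)) + c₂ * J / L := by
        rw [mul_rpow (by positivity) hL0.le]; ring
    _ ≤ c₁ ^ ((n : ℝ) / 2) * V * ((n + 1).factorial / L) + c₂ * J / L := by gcongr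
    _ = (c₁ ^ ((n : ℝ) / 2) * (n + 1).factorial * V + c₂ * J) / L := by ring
    _ ≤ (c₁ ^ ((n : ℝ) / 2) * (n + 1).factorial * V + c₂ * J + 1) / L :=
        div_le_div_of_nonneg_right (lt_add_one _).le hL0.le

end Estimate

theorem stmt_15_general (n : ℕ) (hn : 3 ≤ n) (Fo : EuclideanSpace ℝ (Fin n) → ℝ)
    (hconv : ConvexOn ℝ Set.univ Fo)
    (hhom : ∀ (t : ℝ) ξ, Fo (t • ξ) = |t| * Fo ξ)
    (hpos : ∀ ξ, ξ ≠ 0 → 0 < Fo ξ)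
    (lamn : ℝ) :
    ∃ C > 0, ∃ ε₀ ∈ Set.Ioo (0 : ℝ) 1, ∀ ε : ℝ, 0 < ε → ε < ε₀ →
      (∫ x : EuclideanSpace ℝ (Fin n),
        |if Fo x ≤ ε ^ (1 / (n : ℝ)) then
            (Real.log (1 / ε) / lamn) ^ (((n : ℝ) - 2) / n) -
              Fo x ^ 2 / (ε * Real.log (1 / ε)) ^ (2 / (n : ℝ)) +
              (Real.log (1 / ε)) ^ (-(2 / (n : ℝ)))
          else if Fo x ≤ 1 then
            (n : ℝ) * lamn ^ (2 / (n : ℝ) - 1) * (Real.log (1 / ε)) ^ (-(2 / (n : ℝ))) *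
              Real.log (1 / Fo x)
          else 0| ^ ((n : ℝ) / 2)) ≤ C / Real.log (1 / ε) := by
  obtain ⟨C, hC, hbound⟩ := exists_integral_rpow_abs_moserProfile_le volume
    (continuousOn_univ.mp (hconv.continuousOn isOpen_univ))
    (fun t ht ξ => by rw [hhom, abs_of_nonneg ht]) hpos (by omega) finrank_euclideanSpace_fin
    lamn
  refine ⟨C, hC, exp (-1), ⟨exp_pos _, exp_lt_one_iff.mpr (by norm_num)⟩, fun ε hε hε₀ => ?_⟩
  refine hbound ε hε ?_
  rw [one_div, log_inv, le_neg, ← log_exp (-1)]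
  exact (log_lt_log hε hε₀).le

theorem stmt_15 (n : ℕ) (hn : 3 ≤ n) (Fo : EuclideanSpace ℝ (Fin n) → ℝ)
    (hconv : ConvexOn ℝ Set.univ Fo)
    (hhom : ∀ (t : ℝ) ξ, Fo (t • ξ) = |t| * Fo ξ)
    (hpos : ∀ ξ, ξ ≠ 0 → 0 < Fo ξ)
    (κ lamn : ℝ)
    (hκ : κ = (MeasureTheory.volume {x : EuclideanSpace ℝ (Fin n) | Fo x ≤ 1}).toReal)
    (hlam : lamn = (n : ℝ) ^ ((n : ℝ) / ((n : ℝ) - 2)) *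
      ((n : ℝ) - 2) ^ ((n : ℝ) / ((n : ℝ) - 2)) * κ ^ (2 / ((n : ℝ) - 2))) :
    ∃ C > 0, ∃ ε₀ ∈ Set.Ioo (0 : ℝ) 1, ∀ ε : ℝ, 0 < ε → ε < ε₀ →
      (∫ x : EuclideanSpace ℝ (Fin n),
        |if Fo x ≤ ε ^ (1 / (n : ℝ)) then
            (Real.log (1 / ε) / lamn) ^ (((n : ℝ) - 2) / n) -
              Fo x ^ 2 / (ε * Real.log (1 / ε)) ^ (2 / (n : ℝ)) +
              (Real.log (1 / ε)) ^ (-(2 / (n : ℝ)))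
          else if Fo x ≤ 1 then
            (n : ℝ) * lamn ^ (2 / (n : ℝ) - 1) * (Real.log (1 / ε)) ^ (-(2 / (n : ℝ))) *
              Real.log (1 / Fo x)
          else 0| ^ ((n : ℝ) / 2)) ≤ C / Real.log (1 / ε) :=
  stmt_15_general n hn Fo hconv hhom hpos lamn
end
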